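/- arXiv:2208.04176 — 3 statements merged into one kernel-verified Lean document; each statement's English description precedes it below -/
import Mathlib

section
/- Let ε be a real number with 0 < ε < 1/2. If n is a natural number and c_0, c_1, ..., c_n are real coefficients such that |x - ∑_{k=0}^n c_k x^{2k}| ≤ ε for all x ∈ [0,1], then n > 1/(20ε). -/
open Real intervalIntegral Finset

private lemma integral_sin_freq (c : ℝ) (hc : c ≠ 0) :
    ∫ φ in (0:ℝ)..π, Real.sin (c*φ) = (1 - Real.cos (c*π))/c := by
  have : ∀ φ ∈ Set.uIcc (0:ℝ) π, HasDerivAt (fun x => -Real.cos (c*x)/c) (Real.sin (c*φ)) φ := by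
    intro φ _
    have h1 : HasDerivAt (fun x => c*x) c φ := by
      simpa using (hasDerivAt_id φ).const_mul c
    have h2 := (Real.hasDerivAt_cos (c*φ)).comp φ h1
    have h3 := ((h2.neg).div_const c)
    exact h3.congr_deriv (by field_simp)
  rw [intervalIntegral.integral_eq_sub_of_hasDerivAt this]
  · rw [mul_zero, Real.cos_zero]; ring
  · exact (Real.continuous_sin.comp (continuous_const.mul continuous_id)).intervalIntegrable _ _

private lemma integral_cos_int (r : ℤ) (hr : r ≠ 0) :
    ∫ φ in (0:ℝ)..π, Real.cos (r*φ) = 0 := by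
  have hc : (r:ℝ) ≠ 0 := Int.cast_ne_zero.mpr hr
  have : ∀ φ ∈ Set.uIcc (0:ℝ) π, HasDerivAt (fun x => Real.sin (r*x)/r) (Real.cos (r*φ)) φ := by
    intro φ _
    have h1 : HasDerivAt (fun x => (r:ℝ)*x) (r:ℝ) φ := by
      simpa using (hasDerivAt_id φ).const_mul (r:ℝ)
    have h2 := (Real.hasDerivAt_sin ((r:ℝ)*φ)).comp φ h1
    have h3 := h2.div_const (r:ℝ)
    exact h3.congr_deriv (by field_simp)
  rw [intervalIntegral.integral_eq_sub_of_hasDerivAt this]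
  · rw [mul_zero, Real.sin_zero, Real.sin_int_mul_pi]; simp
  · exact (Real.continuous_cos.comp (continuous_const.mul continuous_id)).intervalIntegrable _ _

private lemma value_integral (M : ℤ) (hM : 1 ≤ M) :
    ∫ φ in (0:ℝ)..π, Real.sin (φ/2) * Real.cos (M*φ)
      = 1/(2*M+1) - 1/(2*M-1) := by
  have key : ∀ φ : ℝ, Real.sin (φ/2) * Real.cos (M*φ)
      = (1/2) * Real.sin (((M:ℝ)+1/2)*φ) - (1/2) * Real.sin (((M:ℝ)-1/2)*φ) := by
    intro φ
    have e1 : ((M:ℝ)+1/2)*φ = M*φ + φ/2 := by ring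
    have e2 : ((M:ℝ)-1/2)*φ = M*φ - φ/2 := by ring
    rw [e1, e2, Real.sin_add, Real.sin_sub]; ring
  rw [intervalIntegral.integral_congr (g := fun φ => (1/2) * Real.sin (((M:ℝ)+1/2)*φ) - (1/2) * Real.sin (((M:ℝ)-1/2)*φ)) (fun φ _ => key φ)]
  have hM1 : (M:ℝ) + 1/2 ≠ 0 := by
    have : (1:ℝ) ≤ M := by exact_mod_cast hM
    linarith
  have hM2 : (M:ℝ) - 1/2 ≠ 0 := by
    have : (1:ℝ) ≤ M := by exact_mod_cast hM
    linarith
  have i1 : IntervalIntegrable (fun φ => Real.sin (((M:ℝ)+1/2)*φ)) MeasureTheory.volume 0 π :=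
    (Real.continuous_sin.comp (continuous_const.mul continuous_id)).intervalIntegrable _ _
  have i2 : IntervalIntegrable (fun φ => Real.sin (((M:ℝ)-1/2)*φ)) MeasureTheory.volume 0 π :=
    (Real.continuous_sin.comp (continuous_const.mul continuous_id)).intervalIntegrable _ _
  rw [intervalIntegral.integral_sub (i1.const_mul _) (i2.const_mul _),
    intervalIntegral.integral_const_mul, intervalIntegral.integral_const_mul,
    integral_sin_freq _ hM1, integral_sin_freq _ hM2]
  have c1 : Real.cos (((M:ℝ)+1/2)*π) = 0 := by
    have : ((M:ℝ)+1/2)*π = M*π + π/2 := by ring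
    rw [this, Real.cos_add_pi_div_two, Real.sin_int_mul_pi, neg_zero]
  have c2 : Real.cos (((M:ℝ)-1/2)*π) = 0 := by
    have : ((M:ℝ)-1/2)*π = -(π/2 - M*π) := by ring
    rw [this, Real.cos_neg, Real.cos_pi_div_two_sub, Real.sin_int_mul_pi]
  rw [c1, c2]
  have : (1:ℝ) ≤ M := by exact_mod_cast hM
  field_simp
  ring

private lemma annihilate (i : ℕ) : ∀ r : ℤ, i < r.natAbs →
    ∫ φ in (0:ℝ)..π, ((1 - Real.cos φ)/2)^i * Real.cos (r*φ) = 0 := by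
  induction i with
  | zero =>
    intro r hr
    simp only [pow_zero, one_mul]
    refine integral_cos_int r ?_
    intro h; subst h; simp at hr
  | succ i ih =>
    intro r hr
    have key : ∀ φ : ℝ, ((1 - Real.cos φ)/2)^(i+1) * Real.cos (r*φ)
        = (1/2) * (((1 - Real.cos φ)/2)^i * Real.cos (r*φ))
          - (1/4) * (((1 - Real.cos φ)/2)^i * Real.cos (((r+1:ℤ):ℝ)*φ))
          - (1/4) * (((1 - Real.cos φ)/2)^i * Real.cos (((r-1:ℤ):ℝ)*φ)) := by
      intro φ
      have e1 : ((r+1:ℤ):ℝ)*φ = r*φ + φ := by push_cast; ring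
      have e2 : ((r-1:ℤ):ℝ)*φ = r*φ - φ := by push_cast; ring
      rw [e1, e2, Real.cos_add, Real.cos_sub, pow_succ]
      ring
    have int : ∀ s : ℤ, IntervalIntegrable (fun φ => ((1 - Real.cos φ)/2)^i * Real.cos (s*φ)) MeasureTheory.volume 0 π :=
      fun s => ((((continuous_const.sub Real.continuous_cos).div_const 2).pow i).mul
        (Real.continuous_cos.comp (continuous_const.mul continuous_id))).intervalIntegrable _ _
    rw [intervalIntegral.integral_congr (fun φ _ => key φ)]
    rw [intervalIntegral.integral_sub (((int r).const_mul _).sub ((int (r+1)).const_mul _)) ((int (r-1)).const_mul _),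
      intervalIntegral.integral_sub ((int r).const_mul _) ((int (r+1)).const_mul _),
      intervalIntegral.integral_const_mul, intervalIntegral.integral_const_mul,
      intervalIntegral.integral_const_mul,
      ih r (by omega), ih (r+1) (by omega), ih (r-1) (by omega)]
    ring

private lemma masterF (n : ℕ) (f : ℝ → ℝ) (hf : Continuous f) :
    ∫ φ in (0:ℝ)..π, f φ * ((∑ j ∈ range n, Real.cos (j*φ))^2 + (∑ j ∈ range n, Real.sin (j*φ))^2)
    = ∑ a ∈ range n, ∑ b ∈ range n, ∫ φ in (0:ℝ)..π, f φ * Real.cos ((((a:ℤ)-(b:ℤ)):ℤ)*φ) := by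
  have key : ∀ φ : ℝ, f φ * ((∑ j ∈ range n, Real.cos (j*φ))^2 + (∑ j ∈ range n, Real.sin (j*φ))^2)
      = ∑ a ∈ range n, ∑ b ∈ range n, f φ * Real.cos ((((a:ℤ)-(b:ℤ)):ℤ)*φ) := by
    intro φ
    have e1 : (∑ j ∈ range n, Real.cos (j*φ))^2
        = ∑ a ∈ range n, ∑ b ∈ range n, Real.cos (a*φ) * Real.cos (b*φ) := by
      rw [sq, Finset.sum_mul_sum]
    have e2 : (∑ j ∈ range n, Real.sin (j*φ))^2
        = ∑ a ∈ range n, ∑ b ∈ range n, Real.sin (a*φ) * Real.sin (b*φ) := by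
      rw [sq, Finset.sum_mul_sum]
    rw [e1, e2, ← Finset.sum_add_distrib, Finset.mul_sum]
    refine Finset.sum_congr rfl (fun a _ => ?_)
    rw [← Finset.sum_add_distrib, Finset.mul_sum]
    refine Finset.sum_congr rfl (fun b _ => ?_)
    have : (((a:ℤ)-(b:ℤ):ℤ):ℝ)*φ = a*φ - b*φ := by push_cast; ring
    rw [this, Real.cos_sub]
    try ring
  rw [intervalIntegral.integral_congr (fun φ _ => key φ)]
  rw [intervalIntegral.integral_finset_sum]
  · exact Finset.sum_congr rfl fun a _ => intervalIntegral.integral_finset_sum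
      (fun b _ => (hf.mul (Real.continuous_cos.comp (continuous_const.mul continuous_id))).intervalIntegrable _ _)
  · intro a _
    exact (Continuous.intervalIntegrable (by
      refine continuous_finset_sum _ (fun b _ => hf.mul (Real.continuous_cos.comp (continuous_const.mul continuous_id)))) _ _)

private lemma value_triple (M k : ℤ) (h1 : 1 ≤ M+k) (h2 : 1 ≤ M-k) :
    ∫ φ in (0:ℝ)..π, (Real.sin (φ/2) * Real.cos ((M:ℝ)*φ)) * Real.cos ((k:ℝ)*φ)
      = (1/2)*(1/(2*((M:ℝ)+k)+1) - 1/(2*((M:ℝ)+k)-1))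
        + (1/2)*(1/(2*((M:ℝ)-k)+1) - 1/(2*((M:ℝ)-k)-1)) := by
  have key : ∀ φ : ℝ, (Real.sin (φ/2) * Real.cos ((M:ℝ)*φ)) * Real.cos ((k:ℝ)*φ)
      = (1/2) * (Real.sin (φ/2) * Real.cos (((M+k:ℤ):ℝ)*φ))
        + (1/2) * (Real.sin (φ/2) * Real.cos (((M-k:ℤ):ℝ)*φ)) := by
    intro φ
    have e1 : ((M+k:ℤ):ℝ)*φ = M*φ + k*φ := by push_cast; ring
    have e2 : ((M-k:ℤ):ℝ)*φ = M*φ - k*φ := by push_cast; ring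
    rw [e1, e2, Real.cos_add, Real.cos_sub]
    ring
  have int : ∀ t : ℤ, IntervalIntegrable (fun φ => Real.sin (φ/2) * Real.cos ((t:ℝ)*φ)) MeasureTheory.volume 0 π :=
    fun t => ((Real.continuous_sin.comp (continuous_id.div_const 2)).mul
      (Real.continuous_cos.comp (continuous_const.mul continuous_id))).intervalIntegrable _ _
  rw [intervalIntegral.integral_congr (fun φ _ => key φ),
    intervalIntegral.integral_add ((int _).const_mul _) ((int _).const_mul _),
    intervalIntegral.integral_const_mul, intervalIntegral.integral_const_mul,
    value_integral (M+k) h1, value_integral (M-k) h2]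
  push_cast
  ring

private lemma annihilate_triple (i : ℕ) (M k : ℤ) (h1 : i < (M+k).natAbs) (h2 : i < (M-k).natAbs) :
    ∫ φ in (0:ℝ)..π, (((1 - Real.cos φ)/2)^i * Real.cos ((M:ℝ)*φ)) * Real.cos ((k:ℝ)*φ) = 0 := by
  have key : ∀ φ : ℝ, (((1 - Real.cos φ)/2)^i * Real.cos ((M:ℝ)*φ)) * Real.cos ((k:ℝ)*φ)
      = (1/2) * (((1 - Real.cos φ)/2)^i * Real.cos (((M+k:ℤ):ℝ)*φ))
        + (1/2) * (((1 - Real.cos φ)/2)^i * Real.cos (((M-k:ℤ):ℝ)*φ)) := by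
    intro φ
    have e1 : ((M+k:ℤ):ℝ)*φ = M*φ + k*φ := by push_cast; ring
    have e2 : ((M-k:ℤ):ℝ)*φ = M*φ - k*φ := by push_cast; ring
    rw [e1, e2, Real.cos_add, Real.cos_sub]
    ring
  have int : ∀ t : ℤ, IntervalIntegrable (fun φ => ((1 - Real.cos φ)/2)^i * Real.cos ((t:ℝ)*φ)) MeasureTheory.volume 0 π :=
    fun t => ((((continuous_const.sub Real.continuous_cos).div_const 2).pow i).mul
      (Real.continuous_cos.comp (continuous_const.mul continuous_id))).intervalIntegrable _ _
  rw [intervalIntegral.integral_congr (fun φ _ => key φ),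
    intervalIntegral.integral_add ((int _).const_mul _) ((int _).const_mul _),
    intervalIntegral.integral_const_mul, intervalIntegral.integral_const_mul,
    annihilate i (M+k) h1, annihilate i (M-k) h2]
  ring

private lemma prod_cos_int (r s : ℤ) (h1 : r+s ≠ 0) (h2 : r-s ≠ 0) :
    ∫ φ in (0:ℝ)..π, Real.cos (r*φ) * Real.cos (s*φ) = 0 := by
  have key : ∀ φ : ℝ, Real.cos (r*φ) * Real.cos (s*φ)
      = (1/2) * Real.cos (((r+s:ℤ):ℝ)*φ) + (1/2) * Real.cos (((r-s:ℤ):ℝ)*φ) := by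
    intro φ
    have e1 : ((r+s:ℤ):ℝ)*φ = r*φ + s*φ := by push_cast; ring
    have e2 : ((r-s:ℤ):ℝ)*φ = r*φ - s*φ := by push_cast; ring
    rw [e1, e2, Real.cos_add, Real.cos_sub]
    ring
  rw [intervalIntegral.integral_congr (fun φ _ => key φ)]
  have int : ∀ t : ℤ, IntervalIntegrable (fun φ => Real.cos ((t:ℝ)*φ)) MeasureTheory.volume 0 π :=
    fun t => (Real.continuous_cos.comp (continuous_const.mul continuous_id)).intervalIntegrable _ _
  rw [intervalIntegral.integral_add ((int _).const_mul _) ((int _).const_mul _),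
    intervalIntegral.integral_const_mul, intervalIntegral.integral_const_mul,
    integral_cos_int _ h1, integral_cos_int _ h2]
  ring

private lemma abs_cos_le (ψ : ℝ) : |Real.cos ψ| ≤ Real.sqrt 2/2 + (Real.sqrt 2/4) * Real.cos (2*ψ) := by
  have h2 : Real.cos (2*ψ) = 2*Real.cos ψ^2 - 1 := Real.cos_two_mul ψ
  have hs : Real.sqrt 2^2 = 2 := Real.sq_sqrt (by norm_num)
  have h0 : (0:ℝ) ≤ Real.sqrt 2 := Real.sqrt_nonneg 2
  nlinarith [sq_nonneg (|Real.cos ψ| - Real.sqrt 2/2), abs_nonneg (Real.cos ψ), sq_abs (Real.cos ψ)]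


private lemma pair_bound (p q : ℝ) (hp : 1 ≤ p) (hq : 1 ≤ q) :
    (1/2)*(1/(2*p+1) - 1/(2*p-1)) + (1/2)*(1/(2*q+1) - 1/(2*q-1)) ≤ -(2/((p+q)^2-1)) := by
  have hA : (0:ℝ) < (2*p+1)*(2*p-1) := by nlinarith
  have hB : (0:ℝ) < (2*q+1)*(2*q-1) := by nlinarith
  have hC : (0:ℝ) < (p+q)^2-1 := by nlinarith
  have e1 : 1/(2*p+1) - 1/(2*p-1) = -(2/((2*p+1)*(2*p-1))) := by
    have u1 : (2*p+1) ≠ 0 := by nlinarith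
    have u2 : (2*p-1) ≠ 0 := by nlinarith
    field_simp
    ring
  have e2 : 1/(2*q+1) - 1/(2*q-1) = -(2/((2*q+1)*(2*q-1))) := by
    have u1 : (2*q+1) ≠ 0 := by nlinarith
    have u2 : (2*q-1) ≠ 0 := by nlinarith
    field_simp
    ring
  have key : 2/((p+q)^2-1) ≤ 1/((2*p+1)*(2*p-1)) + 1/((2*q+1)*(2*q-1)) := by
    rw [div_add_div _ _ (ne_of_gt hA) (ne_of_gt hB), div_le_div_iff₀ hC (mul_pos hA hB)]
    nlinarith [mul_nonneg (sq_nonneg (p-q)) (by nlinarith : (0:ℝ) ≤ 4*(p^2+q^2)+16*(p*q)+2)]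
  rw [e1, e2]
  have r1 : (1/2) * -(2/((2*p+1)*(2*p-1))) = -(1/((2*p+1)*(2*p-1))) := by ring
  have r2 : (1/2) * -(2/((2*q+1)*(2*q-1))) = -(1/((2*q+1)*(2*q-1))) := by ring
  rw [r1, r2]
  linarith

theorem stmt_0 (ε : ℝ) (hε0 : 0 < ε) (hε : ε < 1/2) (n : ℕ) (c : ℕ → ℝ)
    (h : ∀ x ∈ Set.Icc (0:ℝ) 1, |x - ∑ k ∈ Finset.range (n+1), c k * x ^ (2*k)| ≤ ε) :
    (n : ℝ) > 1 / (20 * ε) := by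
  rcases Nat.eq_zero_or_pos n with hn0 | hn1
  · exfalso
    subst hn0
    have h0 := h 0 ⟨le_refl 0, by norm_num⟩
    have h1 := h 1 ⟨by norm_num, le_refl 1⟩
    norm_num [Finset.sum_range_one] at h0 h1
    rw [abs_le] at h0 h1
    linarith [h0.1, h0.2, h1.1, h1.2]
  · have hx1 : (1:ℝ) ≤ (n:ℝ) := by exact_mod_cast hn1
    -- continuity facts
    have contF : Continuous (fun φ:ℝ => (∑ j ∈ range n, Real.cos (j*φ))^2 + (∑ j ∈ range n, Real.sin (j*φ))^2) := by
      apply Continuous.add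
      · exact (continuous_finset_sum _ (fun j _ => Real.continuous_cos.comp (continuous_const.mul continuous_id))).pow 2
      · exact (continuous_finset_sum _ (fun j _ => Real.continuous_sin.comp (continuous_const.mul continuous_id))).pow 2
    have cont_cos2 : Continuous (fun φ:ℝ => Real.cos (((2*(n:ℤ):ℤ):ℝ)*φ)) :=
      Real.continuous_cos.comp (continuous_const.mul continuous_id)
    have cont_cos4 : Continuous (fun φ:ℝ => Real.cos (((4*(n:ℤ):ℤ):ℝ)*φ)) :=
      Real.continuous_cos.comp (continuous_const.mul continuous_id)
    have cont_sinh : Continuous (fun φ:ℝ => Real.sin (φ/2)) :=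
      Real.continuous_sin.comp (continuous_id.div_const 2)
    have cont_pw : ∀ k:ℕ, Continuous (fun φ:ℝ => ((1-Real.cos φ)/2)^k) :=
      fun k => ((continuous_const.sub Real.continuous_cos).div_const 2).pow k
    -- error bound
    have herr : ∀ φ ∈ Set.Icc (0:ℝ) π, |Real.sin (φ/2) - ∑ k ∈ Finset.range (n+1), c k * Real.sin (φ/2) ^ (2*k)| ≤ ε := by
      intro φ hφ
      refine h _ ⟨?_, Real.sin_le_one _⟩
      exact Real.sin_nonneg_of_nonneg_of_le_pi (by linarith [hφ.1]) (by linarith [hφ.2, Real.pi_pos])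
    -- sin^2k rewrite
    have hsin2 : ∀ (φ:ℝ) (k:ℕ), Real.sin (φ/2)^(2*k) = ((1-Real.cos φ)/2)^k := by
      intro φ k
      rw [pow_mul]
      congr 1
      have hc := Real.cos_two_mul (φ/2)
      rw [show 2*(φ/2) = φ by ring] at hc
      rw [Real.sin_sq, hc]; ring
    -- ∫ F = n π
    have IF : ∫ φ in (0:ℝ)..π, ((∑ j ∈ range n, Real.cos (j*φ))^2 + (∑ j ∈ range n, Real.sin (j*φ))^2) = (n:ℝ)*π := by
      have h1 := masterF n (fun _ => (1:ℝ)) continuous_const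
      simp only [one_mul] at h1
      rw [h1]
      have inner : ∀ a ∈ range n, (∑ b ∈ range n, ∫ φ in (0:ℝ)..π, Real.cos ((((a:ℤ)-(b:ℤ)):ℤ)*φ)) = π := by
        intro a ha
        have zero_off : ∀ b ∈ range n, b ≠ a → (∫ φ in (0:ℝ)..π, Real.cos ((((a:ℤ)-(b:ℤ)):ℤ)*φ)) = 0 := by
          intro b _ hba
          exact integral_cos_int _ (sub_ne_zero.mpr (by exact_mod_cast (Ne.symm hba)))
        rw [Finset.sum_eq_single_of_mem a ha zero_off]
        simp only [sub_self, Int.cast_zero, zero_mul, Real.cos_zero]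
        simp
      rw [Finset.sum_congr rfl inner, Finset.sum_const, Finset.card_range, nsmul_eq_mul]
    -- ∫ cos(4n φ) F = 0
    have Icos4F : ∫ φ in (0:ℝ)..π, Real.cos (((4*(n:ℤ):ℤ):ℝ)*φ) * ((∑ j ∈ range n, Real.cos (j*φ))^2 + (∑ j ∈ range n, Real.sin (j*φ))^2) = 0 := by
      have h4 := masterF n (fun φ => Real.cos (((4*(n:ℤ):ℤ):ℝ)*φ)) cont_cos4
      rw [h4]
      refine Finset.sum_eq_zero (fun a ha => Finset.sum_eq_zero (fun b hb => ?_))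
      have ha' := Finset.mem_range.mp ha
      have hb' := Finset.mem_range.mp hb
      exact prod_cos_int (4*(n:ℤ)) ((a:ℤ)-(b:ℤ)) (by omega) (by omega)
    -- main value integral bound
    have IV : ∫ φ in (0:ℝ)..π, (Real.sin (φ/2) * Real.cos (((2*(n:ℤ):ℤ):ℝ)*φ)) * ((∑ j ∈ range n, Real.cos (j*φ))^2 + (∑ j ∈ range n, Real.sin (j*φ))^2)
        ≤ -(2*(n:ℝ)^2/(16*(n:ℝ)^2-1)) := by
      have h2 := masterF n (fun φ => Real.sin (φ/2) * Real.cos (((2*(n:ℤ):ℤ):ℝ)*φ)) (cont_sinh.mul cont_cos2)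
      rw [h2]
      have termb : ∀ a ∈ range n, ∀ b ∈ range n,
          (∫ φ in (0:ℝ)..π, (Real.sin (φ/2) * Real.cos (((2*(n:ℤ):ℤ):ℝ)*φ)) * Real.cos ((((a:ℤ)-(b:ℤ)):ℤ)*φ))
            ≤ -(2/(16*(n:ℝ)^2-1)) := by
        intro a ha b hb
        have ha' := Finset.mem_range.mp ha
        have hb' := Finset.mem_range.mp hb
        have hval := value_triple (2*(n:ℤ)) ((a:ℤ)-(b:ℤ)) (by omega) (by omega)
        refine le_trans (le_of_eq hval) ?_
        have hp : (1:ℝ) ≤ ((2*(n:ℤ):ℤ):ℝ) + (((a:ℤ)-(b:ℤ):ℤ):ℝ) := by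
          have : (1:ℤ) ≤ 2*(n:ℤ) + ((a:ℤ)-(b:ℤ)) := by omega
          exact_mod_cast this
        have hq : (1:ℝ) ≤ ((2*(n:ℤ):ℤ):ℝ) - (((a:ℤ)-(b:ℤ):ℤ):ℝ) := by
          have : (1:ℤ) ≤ 2*(n:ℤ) - ((a:ℤ)-(b:ℤ)) := by omega
          exact_mod_cast this
        have hpq := pair_bound _ _ hp hq
        refine le_trans hpq (le_of_eq ?_)
        have heq : (((2*(n:ℤ):ℤ):ℝ) + (((a:ℤ)-(b:ℤ):ℤ):ℝ) + (((2*(n:ℤ):ℤ):ℝ) - (((a:ℤ)-(b:ℤ):ℤ):ℝ)))^2 - 1 = 16*(n:ℝ)^2-1 := by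
          push_cast
          ring
        rw [heq]
      calc ∑ a ∈ range n, ∑ b ∈ range n, ∫ φ in (0:ℝ)..π, (Real.sin (φ/2) * Real.cos (((2*(n:ℤ):ℤ):ℝ)*φ)) * Real.cos ((((a:ℤ)-(b:ℤ)):ℤ)*φ)
          ≤ ∑ a ∈ range n, ∑ b ∈ range n, -(2/(16*(n:ℝ)^2-1)) := by
            exact Finset.sum_le_sum (fun a ha => Finset.sum_le_sum (fun b hb => termb a ha b hb))
        _ = -(2*(n:ℝ)^2/(16*(n:ℝ)^2-1)) := by
            rw [Finset.sum_const, Finset.sum_const, Finset.card_range, nsmul_eq_mul, nsmul_eq_mul]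
            ring
    -- tail annihilation
    have Itail : ∀ k:ℕ, k ≤ n → (∫ φ in (0:ℝ)..π, (((1-Real.cos φ)/2)^k * Real.cos (((2*(n:ℤ):ℤ):ℝ)*φ)) * ((∑ j ∈ range n, Real.cos (j*φ))^2 + (∑ j ∈ range n, Real.sin (j*φ))^2)) = 0 := by
      intro k hk
      have h3 := masterF n (fun φ => ((1-Real.cos φ)/2)^k * Real.cos (((2*(n:ℤ):ℤ):ℝ)*φ)) ((cont_pw k).mul cont_cos2)
      rw [h3]
      refine Finset.sum_eq_zero (fun a ha => Finset.sum_eq_zero (fun b hb => ?_))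
      have ha' := Finset.mem_range.mp ha
      have hb' := Finset.mem_range.mp hb
      exact annihilate_triple k (2*(n:ℤ)) ((a:ℤ)-(b:ℤ)) (by omega) (by omega)
    -- continuity of error function
    have contE : Continuous (fun φ:ℝ => Real.sin (φ/2) - ∑ k ∈ Finset.range (n+1), c k * Real.sin (φ/2)^(2*k)) := by
      refine Continuous.sub cont_sinh ?_
      exact continuous_finset_sum _ (fun k _ => continuous_const.mul (cont_sinh.pow (2*k)))
    -- integral monotonicity
    have mono : (∫ φ in (0:ℝ)..π, (-(ε * ((Real.sqrt 2/2) * ((∑ j ∈ range n, Real.cos (j*φ))^2 + (∑ j ∈ range n, Real.sin (j*φ))^2) + (Real.sqrt 2/4) * (Real.cos (((4*(n:ℤ):ℤ):ℝ)*φ) * ((∑ j ∈ range n, Real.cos (j*φ))^2 + (∑ j ∈ range n, Real.sin (j*φ))^2))))))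
        ≤ ∫ φ in (0:ℝ)..π, (Real.sin (φ/2) - ∑ k ∈ Finset.range (n+1), c k * Real.sin (φ/2)^(2*k)) * (Real.cos (((2*(n:ℤ):ℤ):ℝ)*φ) * ((∑ j ∈ range n, Real.cos (j*φ))^2 + (∑ j ∈ range n, Real.sin (j*φ))^2)) := by
      refine intervalIntegral.integral_mono_on Real.pi_pos.le ?_ ?_ ?_
      · exact ((continuous_const.mul ((continuous_const.mul contF).add (continuous_const.mul (cont_cos4.mul contF)))).neg).intervalIntegrable _ _
      · exact (contE.mul (cont_cos2.mul contF)).intervalIntegrable _ _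
      · intro φ hφ
        have hFnn : (0:ℝ) ≤ (∑ j ∈ range n, Real.cos (j*φ))^2 + (∑ j ∈ range n, Real.sin (j*φ))^2 := by positivity
        have hcosb : |Real.cos (((2*(n:ℤ):ℤ):ℝ)*φ)| ≤ Real.sqrt 2/2 + Real.sqrt 2/4 * Real.cos (((4*(n:ℤ):ℤ):ℝ)*φ) := by
          have hb := abs_cos_le (((2*(n:ℤ):ℤ):ℝ)*φ)
          rw [show 2*(((2*(n:ℤ):ℤ):ℝ)*φ) = ((4*(n:ℤ):ℤ):ℝ)*φ by push_cast; ring] at hb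
          exact hb
        have habs : |(Real.sin (φ/2) - ∑ k ∈ Finset.range (n+1), c k * Real.sin (φ/2)^(2*k)) * (Real.cos (((2*(n:ℤ):ℤ):ℝ)*φ) * ((∑ j ∈ range n, Real.cos (j*φ))^2 + (∑ j ∈ range n, Real.sin (j*φ))^2))|
            ≤ ε * ((Real.sqrt 2/2 + Real.sqrt 2/4 * Real.cos (((4*(n:ℤ):ℤ):ℝ)*φ)) * ((∑ j ∈ range n, Real.cos (j*φ))^2 + (∑ j ∈ range n, Real.sin (j*φ))^2)) := by
          rw [abs_mul, abs_mul, abs_of_nonneg hFnn]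
          exact mul_le_mul (herr φ hφ) (mul_le_mul_of_nonneg_right hcosb hFnn) (by positivity) hε0.le
        have hring : ε * ((Real.sqrt 2/2) * ((∑ j ∈ range n, Real.cos (j*φ))^2 + (∑ j ∈ range n, Real.sin (j*φ))^2) + (Real.sqrt 2/4) * (Real.cos (((4*(n:ℤ):ℤ):ℝ)*φ) * ((∑ j ∈ range n, Real.cos (j*φ))^2 + (∑ j ∈ range n, Real.sin (j*φ))^2)))
            = ε * ((Real.sqrt 2/2 + Real.sqrt 2/4 * Real.cos (((4*(n:ℤ):ℤ):ℝ)*φ)) * ((∑ j ∈ range n, Real.cos (j*φ))^2 + (∑ j ∈ range n, Real.sin (j*φ))^2)) := by ring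
        rw [hring]
        linarith [neg_abs_le ((Real.sin (φ/2) - ∑ k ∈ Finset.range (n+1), c k * Real.sin (φ/2)^(2*k)) * (Real.cos (((2*(n:ℤ):ℤ):ℝ)*φ) * ((∑ j ∈ range n, Real.cos (j*φ))^2 + (∑ j ∈ range n, Real.sin (j*φ))^2))), habs]
    -- value of the LHS integral
    have LHSval : (∫ φ in (0:ℝ)..π, (-(ε * ((Real.sqrt 2/2) * ((∑ j ∈ range n, Real.cos (j*φ))^2 + (∑ j ∈ range n, Real.sin (j*φ))^2) + (Real.sqrt 2/4) * (Real.cos (((4*(n:ℤ):ℤ):ℝ)*φ) * ((∑ j ∈ range n, Real.cos (j*φ))^2 + (∑ j ∈ range n, Real.sin (j*φ))^2))))))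
        = -(ε*(Real.sqrt 2/2)*((n:ℝ)*π)) := by
      have pt : ∀ φ:ℝ, (-(ε * ((Real.sqrt 2/2) * ((∑ j ∈ range n, Real.cos (j*φ))^2 + (∑ j ∈ range n, Real.sin (j*φ))^2) + (Real.sqrt 2/4) * (Real.cos (((4*(n:ℤ):ℤ):ℝ)*φ) * ((∑ j ∈ range n, Real.cos (j*φ))^2 + (∑ j ∈ range n, Real.sin (j*φ))^2)))))
          = (-(ε*(Real.sqrt 2/2))) * ((∑ j ∈ range n, Real.cos (j*φ))^2 + (∑ j ∈ range n, Real.sin (j*φ))^2) + (-(ε*(Real.sqrt 2/4))) * (Real.cos (((4*(n:ℤ):ℤ):ℝ)*φ) * ((∑ j ∈ range n, Real.cos (j*φ))^2 + (∑ j ∈ range n, Real.sin (j*φ))^2)) := by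
        intro φ; ring
      rw [intervalIntegral.integral_congr (fun φ _ => pt φ)]
      rw [intervalIntegral.integral_add ((contF.intervalIntegrable _ _).const_mul _) (by exact ((cont_cos4.mul contF).intervalIntegrable _ _).const_mul _),
        intervalIntegral.integral_const_mul, intervalIntegral.integral_const_mul, IF, Icos4F]
      ring
    -- splitting the error integral
    have EGsplit : (∫ φ in (0:ℝ)..π, (Real.sin (φ/2) - ∑ k ∈ Finset.range (n+1), c k * Real.sin (φ/2)^(2*k)) * (Real.cos (((2*(n:ℤ):ℤ):ℝ)*φ) * ((∑ j ∈ range n, Real.cos (j*φ))^2 + (∑ j ∈ range n, Real.sin (j*φ))^2)))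
        = (∫ φ in (0:ℝ)..π, (Real.sin (φ/2) * Real.cos (((2*(n:ℤ):ℤ):ℝ)*φ)) * ((∑ j ∈ range n, Real.cos (j*φ))^2 + (∑ j ∈ range n, Real.sin (j*φ))^2))
          - ∑ k ∈ Finset.range (n+1), c k * (∫ φ in (0:ℝ)..π, (((1-Real.cos φ)/2)^k * Real.cos (((2*(n:ℤ):ℤ):ℝ)*φ)) * ((∑ j ∈ range n, Real.cos (j*φ))^2 + (∑ j ∈ range n, Real.sin (j*φ))^2)) := by
      have pt : ∀ φ:ℝ, (Real.sin (φ/2) - ∑ k ∈ Finset.range (n+1), c k * Real.sin (φ/2)^(2*k)) * (Real.cos (((2*(n:ℤ):ℤ):ℝ)*φ) * ((∑ j ∈ range n, Real.cos (j*φ))^2 + (∑ j ∈ range n, Real.sin (j*φ))^2))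
          = (Real.sin (φ/2) * Real.cos (((2*(n:ℤ):ℤ):ℝ)*φ)) * ((∑ j ∈ range n, Real.cos (j*φ))^2 + (∑ j ∈ range n, Real.sin (j*φ))^2)
            - ∑ k ∈ Finset.range (n+1), c k * ((((1-Real.cos φ)/2)^k * Real.cos (((2*(n:ℤ):ℤ):ℝ)*φ)) * ((∑ j ∈ range n, Real.cos (j*φ))^2 + (∑ j ∈ range n, Real.sin (j*φ))^2)) := by
        intro φ
        rw [sub_mul, Finset.sum_mul]
        congr 1
        · ring
        · refine Finset.sum_congr rfl fun k _ => ?_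
          rw [hsin2 φ k]; ring
      rw [intervalIntegral.integral_congr (fun φ _ => pt φ)]
      have intS : IntervalIntegrable (fun φ:ℝ => (Real.sin (φ/2) * Real.cos (((2*(n:ℤ):ℤ):ℝ)*φ)) * ((∑ j ∈ range n, Real.cos (j*φ))^2 + (∑ j ∈ range n, Real.sin (j*φ))^2)) MeasureTheory.volume 0 π :=
        ((cont_sinh.mul cont_cos2).mul contF).intervalIntegrable _ _
      have intT : ∀ k ∈ Finset.range (n+1), IntervalIntegrable (fun φ:ℝ => c k * ((((1-Real.cos φ)/2)^k * Real.cos (((2*(n:ℤ):ℤ):ℝ)*φ)) * ((∑ j ∈ range n, Real.cos (j*φ))^2 + (∑ j ∈ range n, Real.sin (j*φ))^2))) MeasureTheory.volume 0 π :=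
        fun k _ => ((((cont_pw k).mul cont_cos2).mul contF).intervalIntegrable _ _).const_mul _
      have intSum : IntervalIntegrable (fun φ:ℝ => ∑ k ∈ Finset.range (n+1), c k * ((((1-Real.cos φ)/2)^k * Real.cos (((2*(n:ℤ):ℤ):ℝ)*φ)) * ((∑ j ∈ range n, Real.cos (j*φ))^2 + (∑ j ∈ range n, Real.sin (j*φ))^2))) MeasureTheory.volume 0 π := by
        refine Continuous.intervalIntegrable ?_ _ _
        exact continuous_finset_sum _ (fun k _ => continuous_const.mul (((cont_pw k).mul cont_cos2).mul contF))
      rw [intervalIntegral.integral_sub intS intSum]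
      congr 1
      rw [intervalIntegral.integral_finset_sum intT]
      exact Finset.sum_congr rfl fun k _ => intervalIntegral.integral_const_mul _ _
    have tails : ∑ k ∈ Finset.range (n+1), c k * (∫ φ in (0:ℝ)..π, (((1-Real.cos φ)/2)^k * Real.cos (((2*(n:ℤ):ℤ):ℝ)*φ)) * ((∑ j ∈ range n, Real.cos (j*φ))^2 + (∑ j ∈ range n, Real.sin (j*φ))^2)) = 0 := by
      refine Finset.sum_eq_zero fun k hk => ?_
      rw [Itail k (Nat.lt_succ_iff.mp (Finset.mem_range.mp hk))]
      exact mul_zero _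
    -- final chain
    have chain : -(ε*(Real.sqrt 2/2)*((n:ℝ)*π)) ≤ -(2*(n:ℝ)^2/(16*(n:ℝ)^2-1)) := by
      rw [← LHSval]
      refine le_trans mono ?_
      rw [EGsplit, tails, sub_zero]
      exact IV
    have H : 2*(n:ℝ)^2/(16*(n:ℝ)^2-1) ≤ ε * (Real.sqrt 2/2) * (n:ℝ) * π := by
      have : ε*(Real.sqrt 2/2)*((n:ℝ)*π) = ε * (Real.sqrt 2/2) * (n:ℝ) * π := by ring
      linarith [chain]
    -- numerics
    have hs : Real.sqrt 2 < 1.415 := by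
      rw [Real.sqrt_lt' (by norm_num)]
      norm_num
    have hs0 : (0:ℝ) < Real.sqrt 2 := Real.sqrt_pos.mpr (by norm_num)
    have hpi : Real.pi < 3.15 := Real.pi_lt_d2
    have hpi0 : (0:ℝ) < Real.pi := Real.pi_pos
    have hd : (0:ℝ) < 16*(n:ℝ)^2-1 := by nlinarith
    rw [div_le_iff₀ hd] at H
    rw [gt_iff_lt, div_lt_iff₀ (by positivity)]
    nlinarith [mul_pos hε0 (by positivity : (0:ℝ) < (n:ℝ)), sq_nonneg (n:ℝ), mul_pos (mul_pos hε0 hs0) hpi0,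
      mul_le_mul_of_nonneg_left hpi.le (by positivity : (0:ℝ) ≤ ε*Real.sqrt 2*(n:ℝ)*(16*(n:ℝ)^2-1)/2),
      mul_pos (mul_pos hε0 (by positivity : (0:ℝ) < (n:ℝ))) (by positivity : (0:ℝ) < (n:ℝ)^2)]
end

section
/- The linear span of the constant function 1 together with the monomials x ↦ x^p for p a prime number is dense in the space C([0,1]) of continuous real-valued functions on [0,1] with the supremum norm. -/
open Finset intervalIntegral in
lemma muntz_step (m : ℕ) (hm : 1 ≤ m) (lam : ℕ → ℕ) (hgt : ∀ i, m < lam i)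
    (hsm : StrictMono lam) (k : ℕ) :
    ∃ c : ℕ → ℝ, ∀ x ∈ Set.Icc (0:ℝ) 1,
      |x ^ m - ∑ i ∈ Finset.range k, c i * x ^ lam i|
        ≤ ∏ i ∈ Finset.range k, (1 - (m : ℝ) / lam i) := by
  induction k with
  | zero =>
    refine ⟨0, fun x hx => ?_⟩
    simp only [Finset.range_zero, Finset.sum_empty, Finset.prod_empty, sub_zero]
    rw [abs_of_nonneg (pow_nonneg hx.1 m)]
    exact pow_le_one₀ hx.1 hx.2
  | succ k ih =>
    obtain ⟨c, hc⟩ := ih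
    set p : ℕ := lam k with hp
    have hmp : m < p := hgt k
    have hmP : (m : ℝ) < (p:ℝ) := by exact_mod_cast hmp
    have hP0 : (0:ℝ) < (p:ℝ) := by
      have : 0 < p := lt_of_le_of_lt (Nat.zero_le m) hmp
      exact_mod_cast this
    have hmP' : (m : ℝ) ≠ (p:ℝ) := ne_of_lt hmP
    set B : ℝ := ∏ i ∈ Finset.range k, (1 - (m : ℝ) / lam i) with hB
    have hlam0 : ∀ i, (0:ℝ) < (lam i : ℝ) := fun i => by
      have h : 0 < lam i := lt_of_le_of_lt (Nat.zero_le m) (hgt i)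
      exact_mod_cast h
    have hB0 : 0 ≤ B := Finset.prod_nonneg (fun i _ => by
      have h1 : (m:ℝ) < lam i := by exact_mod_cast hgt i
      have h2 := hlam0 i
      have h3 : (m:ℝ)/(lam i) < 1 := (div_lt_one h2).2 h1
      linarith)
    set d : ℕ → ℝ := fun i => ((p:ℝ) - m) / ((lam i : ℝ) - p) with hd
    refine ⟨fun i => if i < k then -(c i * d i) else 1 + ∑ j ∈ Finset.range k, c j * d j,
      fun x hx => ?_⟩
    obtain ⟨hx0, hx1⟩ := hx
    rw [Finset.prod_range_succ, ← hB, ← hp]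
    have hfac : 0 ≤ 1 - (m:ℝ)/(p:ℝ) := by
      have h : (m:ℝ)/(p:ℝ) < 1 := (div_lt_one hP0).2 hmP
      linarith
    rcases eq_or_lt_of_le hx0 with heq | hx0
    · -- x = 0
      rw [← heq]
      have hz : ∀ n : ℕ, 1 ≤ n → (0:ℝ) ^ n = 0 := fun n hn => zero_pow (by omega)
      rw [hz m hm]
      have hzero : ∑ i ∈ Finset.range (k+1),
          (if i < k then -(c i * d i) else 1 + ∑ j ∈ Finset.range k, c j * d j) * (0:ℝ) ^ lam i
          = 0 :=
        Finset.sum_eq_zero (fun i _ => by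
          rw [hz (lam i) (le_of_lt (lt_of_le_of_lt hm (hgt i))), mul_zero])
      rw [hzero, sub_zero, abs_zero]
      positivity
    · -- 0 < x
      have hxne : x ≠ 0 := ne_of_gt hx0
      have h0uIcc : (0:ℝ) ∉ Set.uIcc x 1 := by
        rw [Set.uIcc_of_le hx1]
        rintro ⟨h, -⟩; exact absurd h (not_le.2 hx0)
      set Q : ℝ → ℝ := fun t => t ^ m - ∑ i ∈ Finset.range k, c i * t ^ lam i with hQ
      set I : ℝ := ∫ t in x..(1:ℝ), Q t / t ^ (p+1) with hI
      set J : ℕ → ℝ := fun μ => (1 - x ^ ((μ:ℤ) - p)) / ((μ:ℝ) - p) with hJdef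
      have hint : ∀ μ : ℕ, IntervalIntegrable (fun t : ℝ => t ^ ((μ:ℤ) - p - 1))
          MeasureTheory.volume x 1 :=
        fun μ => intervalIntegrable_zpow (Or.inr h0uIcc)
      have hzpow_eval : ∀ μ : ℕ, (μ:ℝ) ≠ (p:ℝ) →
          (∫ t in x..(1:ℝ), t ^ ((μ:ℤ) - p - 1)) = J μ := by
        intro μ hμ
        have hne : (μ:ℤ) - p - 1 ≠ -1 := by
          intro h
          exact hμ (by exact_mod_cast (show (μ:ℤ) = (p:ℤ) by omega))
        rw [integral_zpow (Or.inr ⟨hne, h0uIcc⟩)]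
        rw [show ((μ:ℤ) - ↑p - 1 + 1) = (μ:ℤ) - p from by ring, one_zpow]
        rw [hJdef]
        push_cast
        ring_nf
      have hsumint : IntervalIntegrable
          (fun t : ℝ => ∑ i ∈ Finset.range k, c i * t ^ ((lam i : ℤ) - p - 1))
          MeasureTheory.volume x 1 := by
        have h1 := IntervalIntegrable.sum (μ := MeasureTheory.volume) (a := x) (b := (1:ℝ))
          (Finset.range k)
          (f := fun i => fun t : ℝ => c i * t ^ ((lam i : ℤ) - p - 1))
          (fun i _ => (hint (lam i)).const_mul (c i))
        have h2 : (∑ i ∈ Finset.range k, fun t : ℝ => c i * t ^ ((lam i : ℤ) - p - 1))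
            = fun t : ℝ => ∑ i ∈ Finset.range k, c i * t ^ ((lam i : ℤ) - p - 1) := by
          funext t
          simp
        rwa [h2] at h1
      have hIeq : I = J m - ∑ i ∈ Finset.range k, c i * J (lam i) := by
        have hcongr : I = ∫ t in x..(1:ℝ),
            (t ^ ((m:ℤ) - p - 1) - ∑ i ∈ Finset.range k, c i * t ^ ((lam i : ℤ) - p - 1)) := by
          apply intervalIntegral.integral_congr
          intro t ht
          rw [Set.uIcc_of_le hx1] at ht
          have ht0 : 0 < t := lt_of_lt_of_le hx0 ht.1
          have htne : t ≠ 0 := ne_of_gt ht0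
          have key : ∀ μ : ℕ, t ^ ((μ:ℤ) - p - 1) = t ^ μ / t ^ (p+1) := by
            intro μ
            rw [show ((μ:ℤ) - p - 1) = (μ:ℤ) - ((p:ℤ)+1) from by push_cast; ring,
              zpow_sub₀ htne]
            norm_cast
          simp only [hQ, key]
          rw [sub_div, Finset.sum_div]
          congr 1
          exact Finset.sum_congr rfl (fun i _ => by rw [mul_div_assoc])
        rw [hcongr, intervalIntegral.integral_sub (hint m) hsumint,
          intervalIntegral.integral_finset_sum (fun i _ => (hint (lam i)).const_mul (c i)),
          hzpow_eval m hmP']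
        congr 1
        refine Finset.sum_congr rfl (fun i hi => ?_)
        rw [intervalIntegral.integral_const_mul, hzpow_eval (lam i) ?_]
        have h := hsm (Finset.mem_range.1 hi)
        exact_mod_cast ne_of_lt h
      have hxp_pos : (0:ℝ) < x ^ p := pow_pos hx0 p
      have hxp_le : x ^ p ≤ 1 := pow_le_one₀ hx0.le hx1
      have hxnegp : x ^ (-(p:ℤ)) = (x ^ p)⁻¹ := by
        rw [zpow_neg, zpow_natCast]
      have hxp1 : (1:ℝ) ≤ x ^ (-(p:ℤ)) := by
        rw [hxnegp]
        exact (one_le_inv₀ hxp_pos).2 hxp_le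
      have hIbound : |I| ≤ B * ((x ^ (-(p:ℤ)) - 1) / p) := by
        have hgint : IntervalIntegrable (fun t : ℝ => B * t ^ (-(p:ℤ) - 1))
            MeasureTheory.volume x 1 :=
          (intervalIntegrable_zpow (Or.inr h0uIcc)).const_mul B
        have hae : ∀ᵐ t ∂(MeasureTheory.volume.restrict (Set.uIoc x 1)),
            ‖Q t / t ^ (p+1)‖ ≤ B * t ^ (-(p:ℤ) - 1) := by
          refine MeasureTheory.ae_restrict_of_forall_mem measurableSet_uIoc ?_
          intro t ht
          rw [Set.uIoc_of_le hx1] at ht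
          have ht0 : 0 < t := lt_trans hx0 ht.1
          have hQb : |Q t| ≤ B := hc t ⟨le_of_lt ht0, ht.2⟩
          rw [Real.norm_eq_abs, abs_div, abs_of_pos (pow_pos ht0 (p+1))]
          have hz : t ^ (-(p:ℤ) - 1) = 1 / t ^ (p+1) := by
            rw [show (-(p:ℤ) - 1) = -((p:ℤ)+1) from by ring, zpow_neg, one_div]
            norm_cast
          rw [hz, mul_one_div, div_le_div_iff₀ (pow_pos ht0 (p+1)) (pow_pos ht0 (p+1))]
          nlinarith [pow_pos ht0 (p+1), hQb, abs_nonneg (Q t)]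
        have hmain := intervalIntegral.norm_integral_le_abs_of_norm_le hae hgint
        rw [Real.norm_eq_abs, ← hI] at hmain
        have hval : (∫ t in x..(1:ℝ), B * t ^ (-(p:ℤ) - 1))
            = B * ((x ^ (-(p:ℤ)) - 1) / p) := by
          rw [intervalIntegral.integral_const_mul, integral_zpow (Or.inr ⟨by
            intro h
            have h2 : (p:ℤ) = 0 := by omega
            have h3 : (0:ℝ) < (p:ℝ) := hP0
            rw [show (p:ℝ) = ((p:ℤ):ℝ) from by push_cast; rfl, h2] at h3
            norm_num at h3, h0uIcc⟩)]
          rw [show (-(p:ℤ) - 1 + 1) = -(p:ℤ) from by ring, one_zpow]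
          push_cast
          have hPne : (p:ℝ) ≠ 0 := ne_of_gt hP0
          field_simp
          have hPi : (p:ℝ) * (p:ℝ)⁻¹ = 1 := mul_inv_cancel₀ hPne
          linear_combination (B * x ^ (-(p:ℤ)) - B) * hPi
        rw [hval] at hmain
        refine le_trans hmain (le_of_eq (abs_of_nonneg ?_))
        exact mul_nonneg hB0 (div_nonneg (by linarith) (by push_cast; linarith))
      have hterm : ∀ μ : ℕ, ((p:ℝ) - m) * x ^ p * J μ
          = ((p:ℝ) - m) / ((μ:ℝ) - p) * (x ^ p - x ^ μ) := by
        intro μ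
        have hkey : x ^ p * x ^ ((μ:ℤ) - p) = x ^ μ := by
          rw [← zpow_natCast x p, ← zpow_add₀ hxne,
            show (p:ℤ) + ((μ:ℤ) - p) = (μ:ℤ) from by ring, zpow_natCast]
        have hmul : x ^ p * (1 - x ^ ((μ:ℤ) - p)) = x ^ p - x ^ μ := by
          rw [mul_sub, mul_one, hkey]
        calc ((p:ℝ) - m) * x ^ p * J μ
            = ((p:ℝ) - m) * (x ^ p * (1 - x ^ ((μ:ℤ) - p))) / ((μ:ℝ) - p) := by
              rw [hJdef]; ring
          _ = ((p:ℝ) - m) * (x ^ p - x ^ μ) / ((μ:ℝ) - p) := by rw [hmul]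
          _ = ((p:ℝ) - m) / ((μ:ℝ) - p) * (x ^ p - x ^ μ) := by ring
      -- representation
      have hrep : x ^ m - ∑ i ∈ Finset.range (k+1),
          (if i < k then -(c i * d i) else 1 + ∑ j ∈ Finset.range k, c j * d j) * x ^ lam i
          = ((p:ℝ) - m) * x ^ p * I := by
        rw [hIeq, mul_sub, hterm m, Finset.mul_sum]
        have hsum1 : ∑ i ∈ Finset.range k,
            ((p:ℝ) - m) * x ^ p * (c i * J (lam i))
            = ∑ i ∈ Finset.range k, (c i * d i * x ^ p - c i * d i * x ^ lam i) := by
          refine Finset.sum_congr rfl (fun i hi => ?_)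
          have h1 : ((p:ℝ) - m) * x ^ p * (c i * J (lam i))
              = c i * (((p:ℝ) - m) * x ^ p * J (lam i)) := by ring
          rw [h1, hterm (lam i), hd]
          simp only
          ring
        rw [hsum1, Finset.sum_sub_distrib, ← Finset.sum_mul]
        have hm1 : ((p:ℝ) - m) / ((m:ℝ) - p) = -1 := by
          rw [div_eq_iff (by intro h; apply hmP'; linarith [sub_eq_zero.1 h] : (m:ℝ) - p ≠ 0)]
          ring
        rw [hm1, Finset.sum_range_succ]
        have hsum2 : ∑ i ∈ Finset.range k,
            (if i < k then -(c i * d i) else 1 + ∑ j ∈ Finset.range k, c j * d j) * x ^ lam i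
            = -∑ i ∈ Finset.range k, c i * d i * x ^ lam i := by
          rw [← Finset.sum_neg_distrib]
          exact Finset.sum_congr rfl (fun i hi => by
            rw [if_pos (Finset.mem_range.1 hi)]; ring)
        rw [hsum2, if_neg (lt_irrefl k)]
        ring
      rw [hrep]
      have habs : |((p:ℝ) - m) * x ^ p * I| = ((p:ℝ) - m) * x ^ p * |I| := by
        rw [abs_mul, abs_of_nonneg (mul_nonneg (by linarith : (0:ℝ) ≤ (p:ℝ) - m) hxp_pos.le)]
      rw [habs]
      calc ((p:ℝ) - m) * x ^ p * |I|
          ≤ ((p:ℝ) - m) * x ^ p * (B * ((x ^ (-(p:ℤ)) - 1) / p)) := by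
            apply mul_le_mul_of_nonneg_left hIbound (mul_nonneg (by linarith : (0:ℝ) ≤ (p:ℝ) - m) hxp_pos.le)
        _ = B * (((p:ℝ) - m) / p) * (x ^ p * x ^ (-(p:ℤ)) - x ^ p) := by
            ring
        _ = B * (((p:ℝ) - m) / p) * (1 - x ^ p) := by
            rw [hxnegp, mul_inv_cancel₀ (ne_of_gt hxp_pos)]
        _ ≤ B * (1 - (m:ℝ)/p) := by
            have he : ((p:ℝ) - m) / p = 1 - (m:ℝ)/p := by field_simp
            rw [he]
            have h1 : 1 - x ^ p ≤ 1 := by linarith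
            have h2 : 0 ≤ B * (1 - (m:ℝ)/p) := mul_nonneg hB0 hfac
            nlinarith

open Filter in
lemma muntz_prod_tendsto (m : ℕ) (hm : 1 ≤ m) :
    ∃ lam : ℕ → ℕ, (∀ i, (lam i).Prime) ∧ (∀ i, m < lam i) ∧ StrictMono lam ∧
      Tendsto (fun k => ∏ i ∈ Finset.range k, (1 - (m:ℝ) / lam i)) atTop (nhds 0) := by
  set q : ℕ → Prop := fun n => Nat.Prime n ∧ m < n with hqdef
  have hq : (setOf q).Infinite := by
    have h1 : (setOf q) = {n | n.Prime} \ Set.Iic m := by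
      ext n; simp [hqdef, Set.mem_diff, not_le]; exact Iff.rfl
    rw [h1]
    exact Nat.infinite_setOf_prime.diff (Set.finite_Iic m)
  refine ⟨Nat.nth q, fun i => (Nat.nth_mem_of_infinite hq i).1,
    fun i => (Nat.nth_mem_of_infinite hq i).2, Nat.nth_strictMono hq, ?_⟩
  have hpos : ∀ i, (0:ℝ) < (Nat.nth q i : ℝ) := fun i => by
    have h := (Nat.nth_mem_of_infinite hq i).1.pos; exact_mod_cast h
  have hlt : ∀ i, (m:ℝ) < (Nat.nth q i : ℝ) := fun i => by
    exact_mod_cast (Nat.nth_mem_of_infinite hq i).2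
  have hnotsum : ¬ Summable (fun i : ℕ => (1:ℝ) / (Nat.nth q i : ℝ)) := by
    intro hs
    haveI := hq.to_subtype
    have h1 : Summable ((fun n : ℕ => (1:ℝ)/n) ∘ ((↑) : setOf q → ℕ)) := by
      have h2 : (fun i : ℕ => (1:ℝ)/(Nat.nth q i : ℝ))
          = ((fun n : ℕ => (1:ℝ)/n) ∘ ((↑) : setOf q → ℕ))
            ∘ (@Nat.Subtype.orderIsoOfNat (setOf q) hq.to_subtype) := by
        funext i
        simp only [Function.comp_apply, ← Nat.nth_apply_eq_orderIsoOfNat hq]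
        exact congrArg (fun n : ℕ => (1:ℝ)/n) (Nat.nth_apply_eq_orderIsoOfNat hq i)
      rw [h2] at hs
      exact (Equiv.summable_iff
        (@Nat.Subtype.orderIsoOfNat (setOf q) hq.to_subtype).toEquiv).1 hs
    have h2 : Summable (Set.indicator (setOf q) (fun n : ℕ => (1:ℝ)/n)) :=
      summable_subtype_iff_indicator.1 h1
    have h3 : Summable (Set.indicator {p : ℕ | p.Prime} (fun n : ℕ => (1:ℝ)/n)) := by
      have hdec : Set.indicator {p : ℕ | p.Prime} (fun n : ℕ => (1:ℝ)/n)
          = Set.indicator (setOf q) (fun n : ℕ => (1:ℝ)/n)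
            + Set.indicator ({p : ℕ | p.Prime} ∩ Set.Iic m) (fun n : ℕ => (1:ℝ)/n) := by
        funext n
        simp only [Pi.add_apply, Set.indicator_apply, Set.mem_setOf_eq, Set.mem_inter_iff,
          Set.mem_Iic, hqdef]
        split_ifs <;> simp_all [setOf] <;> omega
      rw [hdec]
      refine h2.add (summable_of_ne_finset_zero (s := Finset.Iic m) ?_)
      intro n hn
      have h4 : ¬ n ≤ m := by simpa using hn
      simp [Set.indicator_apply, Set.mem_inter_iff, Set.mem_Iic, h4]
    exact not_summable_one_div_on_primes h3
  have hsum : Tendsto (fun k => ∑ i ∈ Finset.range k, (1:ℝ)/(Nat.nth q i)) atTop atTop :=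
    (not_summable_iff_tendsto_nat_atTop_of_nonneg
      (fun i => by have := hpos i; positivity)).1 hnotsum
  have hfac0 : ∀ i, (0:ℝ) ≤ 1 - (m:ℝ)/(Nat.nth q i) := fun i => by
    have h1 : (m:ℝ)/(Nat.nth q i) < 1 := (div_lt_one (hpos i)).2 (hlt i)
    linarith
  have hlb : ∀ k, (0:ℝ) ≤ ∏ i ∈ Finset.range k, (1 - (m:ℝ)/(Nat.nth q i)) :=
    fun k => Finset.prod_nonneg (fun i _ => hfac0 i)
  have hub : ∀ k, ∏ i ∈ Finset.range k, (1 - (m:ℝ)/(Nat.nth q i))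
      ≤ Real.exp (-((m:ℝ) * ∑ i ∈ Finset.range k, (1:ℝ)/(Nat.nth q i))) := by
    intro k
    have hle : ∀ i ∈ Finset.range k,
        (1 - (m:ℝ)/(Nat.nth q i)) ≤ Real.exp (-((m:ℝ)/(Nat.nth q i))) := fun i _ => by
      have h := Real.add_one_le_exp (-((m:ℝ)/(Nat.nth q i)))
      linarith
    calc ∏ i ∈ Finset.range k, (1 - (m:ℝ)/(Nat.nth q i))
        ≤ ∏ i ∈ Finset.range k, Real.exp (-((m:ℝ)/(Nat.nth q i))) :=
          Finset.prod_le_prod (fun i _ => hfac0 i) hle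
      _ = Real.exp (∑ i ∈ Finset.range k, -((m:ℝ)/(Nat.nth q i))) :=
          (Real.exp_sum _ _).symm
      _ = Real.exp (-((m:ℝ) * ∑ i ∈ Finset.range k, (1:ℝ)/(Nat.nth q i))) := by
          congr 1
          rw [Finset.mul_sum, ← Finset.sum_neg_distrib]
          exact Finset.sum_congr rfl (fun i _ => by rw [mul_one_div])
  refine squeeze_zero hlb hub ?_
  have hm0 : (0:ℝ) < m := by exact_mod_cast hm
  have h5 : Tendsto (fun k => -((m:ℝ) * ∑ i ∈ Finset.range k, (1:ℝ)/(Nat.nth q i)))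
      atTop atBot :=
    tendsto_neg_atTop_atBot.comp (hsum.const_mul_atTop hm0)
  exact Real.tendsto_exp_atBot.comp h5

noncomputable def iccMono (m : ℕ) : C(Set.Icc (0:ℝ) 1, ℝ) :=
  ⟨fun x => (x:ℝ) ^ m, (continuous_pow m).comp continuous_subtype_val⟩

lemma iccMono_mem_closure (m : ℕ) :
    iccMono m ∈ closure (↑(Submodule.span ℝ
        ({f : C(Set.Icc (0:ℝ) 1, ℝ) | ∀ x, f x = 1} ∪
         {f : C(Set.Icc (0:ℝ) 1, ℝ) | ∃ p : ℕ, p.Prime ∧ ∀ x, f x = (x:ℝ) ^ p}))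
      : Set C(Set.Icc (0:ℝ) 1, ℝ)) := by
  rcases Nat.eq_zero_or_pos m with h0 | h1
  · apply subset_closure
    apply Submodule.subset_span
    left
    intro x
    simp [iccMono, h0]
  · obtain ⟨lam, hprime, hgt, hsm, htend⟩ := muntz_prod_tendsto m h1
    rw [Metric.mem_closure_iff]
    intro ε hε
    obtain ⟨k, hk⟩ := (htend.eventually_lt_const hε).exists
    obtain ⟨c, hc⟩ := muntz_step m h1 lam hgt hsm k
    refine ⟨∑ i ∈ Finset.range k, c i • iccMono (lam i), ?_, ?_⟩
    · exact Submodule.sum_mem _ (fun i _ => Submodule.smul_mem _ _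
        (Submodule.subset_span (Or.inr ⟨lam i, hprime i, fun x => rfl⟩)))
    · rw [dist_eq_norm, ContinuousMap.norm_lt_iff _ hε]
      intro x
      have hx : (x:ℝ) ∈ Set.Icc (0:ℝ) 1 := x.2
      calc ‖(iccMono m - ∑ i ∈ Finset.range k, c i • iccMono (lam i)) x‖
          = |(x:ℝ)^m - ∑ i ∈ Finset.range k, c i * (x:ℝ)^(lam i)| := by
            simp [iccMono, ContinuousMap.sub_apply, ContinuousMap.sum_apply,
              ContinuousMap.smul_apply, smul_eq_mul, Real.norm_eq_abs]
        _ ≤ ∏ i ∈ Finset.range k, (1 - (m:ℝ)/(lam i)) := hc x hx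
        _ < ε := hk

theorem stmt_12 :
    Dense (↑(Submodule.span ℝ
        ({f : C(Set.Icc (0:ℝ) 1, ℝ) | ∀ x, f x = 1} ∪
         {f : C(Set.Icc (0:ℝ) 1, ℝ) | ∃ p : ℕ, p.Prime ∧ ∀ x, f x = (x:ℝ) ^ p}))
      : Set C(Set.Icc (0:ℝ) 1, ℝ)) := by
  set S : Set C(Set.Icc (0:ℝ) 1, ℝ) :=
    ({f : C(Set.Icc (0:ℝ) 1, ℝ) | ∀ x, f x = 1} ∪
     {f : C(Set.Icc (0:ℝ) 1, ℝ) | ∃ p : ℕ, p.Prime ∧ ∀ x, f x = (x:ℝ) ^ p}) with hS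
  have hmem : ∀ n : ℕ, iccMono n ∈ (Submodule.span ℝ S).topologicalClosure := by
    intro n
    have h := iccMono_mem_closure n
    rw [← hS, ← Submodule.topologicalClosure_coe] at h
    exact h
  have hpoly : (polynomialFunctions (Set.Icc (0:ℝ) 1) : Set C(Set.Icc (0:ℝ) 1, ℝ))
      ⊆ closure (↑(Submodule.span ℝ S) : Set C(Set.Icc (0:ℝ) 1, ℝ)) := by
    intro f hf
    rw [polynomialFunctions_coe] at hf
    obtain ⟨g, rfl⟩ := hf
    suffices hmem2 : (Polynomial.toContinuousMapOnAlgHom (Set.Icc (0:ℝ) 1)) g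
        ∈ (Submodule.span ℝ S).topologicalClosure by
      rw [← Submodule.topologicalClosure_coe]
      exact hmem2
    induction g using Polynomial.induction_on' with
    | add p q hp hq => rw [map_add]; exact add_mem hp hq
    | monomial n a =>
      have heq : (Polynomial.toContinuousMapOnAlgHom (Set.Icc (0:ℝ) 1))
          (Polynomial.monomial n a) = a • iccMono n := by
        ext x
        simp [iccMono, Polynomial.toContinuousMapOnAlgHom, Polynomial.toContinuousMapOn,
          Polynomial.toContinuousMap]
      rw [heq]
      exact Submodule.smul_mem _ _ (hmem n)
  have hclo : closure ((polynomialFunctions (Set.Icc (0:ℝ) 1) : Set C(Set.Icc (0:ℝ) 1, ℝ)))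
      = Set.univ := by
    have h := polynomialFunctions_closure_eq_top 0 1
    calc closure ((polynomialFunctions (Set.Icc (0:ℝ) 1) : Set C(Set.Icc (0:ℝ) 1, ℝ)))
        = ((polynomialFunctions (Set.Icc (0:ℝ) 1)).topologicalClosure
            : Set C(Set.Icc (0:ℝ) 1, ℝ)) :=
          (Subalgebra.topologicalClosure_coe _).symm
      _ = ((⊤ : Subalgebra ℝ C(Set.Icc (0:ℝ) 1, ℝ)) : Set C(Set.Icc (0:ℝ) 1, ℝ)) := by rw [h]
      _ = Set.univ := by simp
  rw [dense_iff_closure_eq]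
  apply Set.eq_univ_of_univ_subset
  calc Set.univ
      = closure ((polynomialFunctions (Set.Icc (0:ℝ) 1) : Set C(Set.Icc (0:ℝ) 1, ℝ))) :=
        hclo.symm
    _ ⊆ closure (closure (↑(Submodule.span ℝ S) : Set C(Set.Icc (0:ℝ) 1, ℝ))) :=
        closure_mono hpoly
    _ = closure (↑(Submodule.span ℝ S) : Set C(Set.Icc (0:ℝ) 1, ℝ)) := closure_closure
end

section
/- For every real M > 0 there exists ε_0 > 0 such that for all ε with 0 < ε < ε_0, any natural number n and real coefficients c_0, ..., c_n satisfying |x - ∑_{k=0}^n c_k x^{2k}| ≤ ε for all x ∈ [0,1] must have max_{0 ≤ k ≤ n} |c_k| > M. -/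
/-!
If every coefficient is at most `M` in absolute value, `p x = ∑ c k * x ^ (2 * k)` is flat near `0`:
`|p x - p 0| ≤ 2 M x²` for `x ≤ 1/2`, while `|p 0| ≤ ε`. So at `x = min (1/2) (1/(4M))` the
approximation `|x - p x| ≤ ε` forces `x ≤ 4 ε`, which fails once `ε < x / 4`.
-/

open Finset

theorem abs_sum_mul_pow_sub_le {n : ℕ} {c : ℕ → ℝ} {M y : ℝ}
    (hc : ∀ k ∈ range (n + 1), |c k| ≤ M) (hy₀ : 0 ≤ y) (hy₁ : y < 1) :
    |∑ k ∈ range (n + 1), c k * y ^ k - c 0| ≤ M * y / (1 - y) := by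
  have htail : ∑ k ∈ range (n + 1), c k * y ^ k - c 0 = ∑ k ∈ Ico 1 (n + 1), c k * y ^ k := by
    rw [range_eq_Ico, sum_eq_sum_Ico_succ_bot (Nat.succ_pos n)]
    simp
  rw [htail, mul_div_assoc]
  calc |∑ k ∈ Ico 1 (n + 1), c k * y ^ k|
      ≤ ∑ k ∈ Ico 1 (n + 1), M * y ^ k := by
        refine (abs_sum_le_sum_abs _ _).trans (sum_le_sum fun k hk => ?_)
        rw [abs_mul, abs_of_nonneg (pow_nonneg hy₀ k)]
        exact mul_le_mul_of_nonneg_right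
          (hc k (mem_range.2 (mem_Ico.1 hk).2))
          (pow_nonneg hy₀ k)
    _ = M * ∑ k ∈ Ico 1 (n + 1), y ^ k := (mul_sum ..).symm
    _ ≤ M * (y ^ 1 / (1 - y)) := by
        have hM : 0 ≤ M := (abs_nonneg _).trans (hc 0 (mem_range.2 n.succ_pos))
        exact mul_le_mul_of_nonneg_left (geom_sum_Ico_le_of_lt_one hy₀ hy₁) hM
    _ = M * (y / (1 - y)) := by rw [pow_one]

theorem stmt_15 (M : ℝ) (hM : 0 < M) :
    ∃ ε₀ > (0:ℝ), ∀ ε : ℝ, 0 < ε → ε < ε₀ →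
      ∀ (n : ℕ) (c : ℕ → ℝ),
        (∀ x ∈ Set.Icc (0:ℝ) 1, |x - ∑ k ∈ Finset.range (n+1), c k * x ^ (2*k)| ≤ ε) →
        (Finset.range (n+1)).sup' (Finset.nonempty_range_iff.mpr (Nat.succ_ne_zero n))
          (fun k => |c k|) > M := by
  set x := min (1 / 2) (1 / (4 * M))
  have hx₀ : 0 < x := lt_min (by norm_num) (by positivity)
  have hx₁ : x ≤ 1 / 2 := min_le_left _ _
  have hxM : 4 * M * x ≤ 1 := (le_div_iff₀' (by positivity)).1 (min_le_right _ _)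
  refine ⟨x / 4, by positivity, fun ε _ hε n c happ => ?_⟩
  by_contra! hsup
  have hc : ∀ k ∈ range (n + 1), |c k| ≤ M := (sup'_le_iff _ _).1 hsup
  have hc₀ : |c 0| ≤ ε := by
    simpa [sum_range_succ'] using happ 0 (by simp)
  have hflat : |∑ k ∈ range (n + 1), c k * x ^ (2 * k) - c 0| ≤ 2 * M * x ^ 2 := by
    have hy : x ^ 2 ≤ 1 / 2 := by nlinarith
    simp_rw [pow_mul]
    refine (abs_sum_mul_pow_sub_le hc (by positivity) (by linarith)).trans ?_
    rw [div_le_iff₀ (by linarith)]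
    nlinarith [mul_nonneg (sub_nonneg.2 hy) (mul_nonneg hM.le (sq_nonneg x))]
  have hMx : 2 * M * x ^ 2 ≤ x / 2 := by nlinarith
  have hx_le : x ≤ 4 * ε := by
    linarith [le_of_abs_le (happ x ⟨hx₀.le, by linarith⟩), le_of_abs_le hflat, le_of_abs_le hc₀]
  linarith
end
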